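/- arXiv:2501.15301 — 4 statements merged into one kernel-verified Lean document; each statement's English description precedes it below -/
import Mathlib

section
/- If s : 𝒳 → 𝒮 and t : 𝒴 → 𝒯 are both sufficient, then for every β > 0 the information-bottleneck Lagrangian value is preserved: L*(p;β) = L*(pST;β), where pST is the joint pmf on 𝒮 × 𝒯 induced by p. -/
open Finset

noncomputable section
open scoped Classical

variable {𝒳 𝒴 𝒮 𝒯 : Type*}

/-- Marginal of a joint pmf on the first coordinate. -/
def margX [Fintype 𝒴] (p : 𝒳 × 𝒴 → ℝ) (x : 𝒳) : ℝ := ∑ y, p (x, y)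

/-- Marginal of a joint pmf on the second coordinate. -/
def margY [Fintype 𝒳] (p : 𝒳 × 𝒴 → ℝ) (y : 𝒴) : ℝ := ∑ x, p (x, y)

/-- Distribution of `S = s(X)`. -/
def margS [Fintype 𝒳] [Fintype 𝒴] (p : 𝒳 × 𝒴 → ℝ) (s : 𝒳 → 𝒮) (s0 : 𝒮) : ℝ :=
  ∑ x ∈ Finset.univ.filter (fun x => s x = s0), margX p x

/-- Distribution of `T = t(Y)`. -/
def margT [Fintype 𝒳] [Fintype 𝒴] (p : 𝒳 × 𝒴 → ℝ) (t : 𝒴 → 𝒯) (t0 : 𝒯) : ℝ :=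
  ∑ y ∈ Finset.univ.filter (fun y => t y = t0), margY p y

/-- Joint distribution of `(S, T) = (s(X), t(Y))`. -/
def margST [Fintype 𝒳] [Fintype 𝒴] (p : 𝒳 × 𝒴 → ℝ) (s : 𝒳 → 𝒮) (t : 𝒴 → 𝒯)
    (w : 𝒮 × 𝒯) : ℝ :=
  ∑ x ∈ Finset.univ.filter (fun x => s x = w.1),
    ∑ y ∈ Finset.univ.filter (fun y => t y = w.2), p (x, y)

/-- `q` is a probability mass function. -/
def IsPMF {Z : Type*} [Fintype Z] (q : Z → ℝ) : Prop := (∀ z, 0 ≤ q z) ∧ ∑ z, q z = 1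

/-- `s` is a sufficient statistic of `X` for `Y` (Markov chain `X - S - Y`). -/
def SuffS [Fintype 𝒴] (p : 𝒳 × 𝒴 → ℝ) (s : 𝒳 → 𝒮) : Prop :=
  ∀ x x' y, s x = s x' → p (x, y) * margX p x' = p (x', y) * margX p x

/-- `t` is a sufficient statistic of `Y` for `X` (Markov chain `X - T - Y`). -/
def SuffT [Fintype 𝒳] (p : 𝒳 × 𝒴 → ℝ) (t : 𝒴 → 𝒯) : Prop :=
  ∀ x y y', t y = t y' → p (x, y) * margY p y' = p (x, y') * margY p y

/-- Mutual information of a joint pmf on `A × B`. -/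
def mutInfo {A B : Type*} [Fintype A] [Fintype B] (q : A × B → ℝ) : ℝ :=
  ∑ z : A × B, if 0 < q z then
    q z * Real.log (q z / ((∑ b, q (z.1, b)) * (∑ a, q (a, z.2)))) else 0

/-- Shannon entropy of a pmf on a finite type. -/
def entropy {W : Type*} [Fintype W] (r : W → ℝ) : ℝ :=
  -∑ w, if 0 < r w then r w * Real.log (r w) else 0

/-- Wyner's common information of a joint pmf `m` on `A × B`. -/
def wynerCI {A B : Type*} [Fintype A] [Fintype B] (m : A × B → ℝ) : ℝ :=
  sInf { c | ∃ (n : ℕ) (q : A × B × Fin n → ℝ),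
    IsPMF q ∧
    (∀ a b, ∑ w, q (a, b, w) = m (a, b)) ∧
    (∀ a b w, q (a, b, w) * (∑ a', ∑ b', q (a', b', w)) =
      (∑ b', q (a, b', w)) * (∑ a', q (a', b, w))) ∧
    c = mutInfo (fun z : Fin n × (A × B) => q (z.2.1, z.2.2, z.1)) }

/-- Gács–Körner common information of a joint pmf `m` on `A × B`. -/
def gkCI {A B : Type*} [Fintype A] [Fintype B] (m : A × B → ℝ) : ℝ :=
  sSup { c | ∃ (n : ℕ) (f : A → Fin n) (g : B → Fin n),
    (∑ z : A × B, if f z.1 ≠ g z.2 then m z else 0) = 0 ∧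
    c = entropy (fun w : Fin n =>
      ∑ a ∈ Finset.univ.filter (fun a => f a = w), ∑ b, m (a, b)) }

/-- Information-bottleneck Lagrangian value. -/
def ibL {A B : Type*} [Fintype A] [Fintype B] (m : A × B → ℝ) (β : ℝ) : ℝ :=
  sInf { c | ∃ (n : ℕ) (r : A → Fin n → ℝ),
    (∀ a u, 0 ≤ r a u) ∧ (∀ a, ∑ u, r a u = 1) ∧
    c = mutInfo (fun z : Fin n × A => r z.2 z.1 * ∑ b, m (z.2, b))
        - β * mutInfo (fun z : Fin n × B => ∑ a, r a z.1 * m (a, z.2)) }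

/-- Information-bottleneck curve. -/
def ibCurve {A B : Type*} [Fintype A] [Fintype B] (m : A × B → ℝ) (R : ℝ) : ℝ :=
  sSup { c | ∃ (n : ℕ) (r : A → Fin n → ℝ),
    (∀ a u, 0 ≤ r a u) ∧ (∀ a, ∑ u, r a u = 1) ∧
    mutInfo (fun z : Fin n × A => r z.2 z.1 * ∑ b, m (z.2, b)) ≤ R ∧
    c = mutInfo (fun z : Fin n × B => ∑ a, r a z.1 * m (a, z.2)) }


/-!
Both Lagrangian values are infima over encoders, and every encoder on either side is matched
by one on the other side that does at least as well. An encoder `r` of `S` lifts to `r ∘ s`;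
an encoder of `X` is replaced by its average over the fibres of `s`, the conditional law of `U`
given `S`, which by sufficiency of `s` leaves the joint law of `(U, Y)` unchanged. Passing from
`X` to `S` or from `Y` to `T` does not change `I(U;·)` when `U - S - X`, resp. `U - T - Y`, is
Markov (equality in the log-sum inequality); the lift and sufficiency of `t` provide these
chains. For the averaged encoder only `I(U;S) ≤ I(U;X)` holds, by data processing, and that is
all that is needed.
-/

open Real

section LogSum

lemma mul_log_add_sub_le_mul_log_div {a b c : ℝ} (ha : 0 ≤ a) (hb : 0 ≤ b)
    (hab : 0 < a → 0 < b) (hc : 0 < c) :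
    a * log c + a - c * b ≤ a * log (a / b) := by
  rcases ha.eq_or_lt with rfl | ha
  · simpa using mul_nonneg hc.le hb
  have hb := hab ha
  calc a * log c + a - c * b = a * log c + a * (1 - (a / (b * c))⁻¹) := by
        field_simp
        ring
    _ ≤ a * log c + a * log (a / (b * c)) := by
        gcongr
        exact one_sub_inv_le_log_of_pos (by positivity)
    _ = a * log (a / b) := by
        rw [← div_div, log_div (by positivity) hc.ne']
        ring

variable {ι : Type*} {s : Finset ι} {a b : ι → ℝ}

/-- The log-sum inequality. -/
theorem mul_log_sum_div_sum_le (ha : ∀ i ∈ s, 0 ≤ a i) (hb : ∀ i ∈ s, 0 ≤ b i)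
    (hab : ∀ i ∈ s, 0 < a i → 0 < b i) :
    (∑ i ∈ s, a i) * log ((∑ i ∈ s, a i) / ∑ i ∈ s, b i) ≤ ∑ i ∈ s, a i * log (a i / b i) := by
  rcases (sum_nonneg ha).eq_or_lt with hA | hA
  · have hzero := (sum_eq_zero_iff_of_nonneg ha).1 hA.symm
    rw [← hA, zero_mul, sum_eq_zero fun i hi => by rw [hzero i hi, zero_mul]]
  obtain ⟨i, hi, hai⟩ : ∃ i ∈ s, 0 < a i := by
    by_contra! h
    exact hA.not_ge (sum_nonpos h)
  have hB : 0 < ∑ i ∈ s, b i := (hab i hi hai).trans_le (single_le_sum hb hi)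
  calc (∑ i ∈ s, a i) * log ((∑ i ∈ s, a i) / ∑ i ∈ s, b i)
      = ∑ i ∈ s, (a i * log ((∑ i ∈ s, a i) / ∑ i ∈ s, b i) + a i
          - (∑ i ∈ s, a i) / (∑ i ∈ s, b i) * b i) := by
        rw [sum_sub_distrib, sum_add_distrib, ← sum_mul, ← mul_sum, div_mul_cancel₀ _ hB.ne']
        ring
    _ ≤ ∑ i ∈ s, a i * log (a i / b i) :=
        sum_le_sum fun i hi =>
          mul_log_add_sub_le_mul_log_div (ha i hi) (hb i hi) (hab i hi) (div_pos hA hB)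

theorem mul_log_sum_div_sum_eq (ha : ∀ i ∈ s, 0 ≤ a i) (hb : ∀ i ∈ s, 0 ≤ b i)
    (hab : ∀ i ∈ s, 0 < a i → 0 < b i)
    (hprop : ∀ i ∈ s, a i * ∑ j ∈ s, b j = (∑ j ∈ s, a j) * b i) :
    (∑ i ∈ s, a i) * log ((∑ i ∈ s, a i) / ∑ i ∈ s, b i) = ∑ i ∈ s, a i * log (a i / b i) := by
  rw [sum_mul]
  refine sum_congr rfl fun i hi => ?_
  rcases (ha i hi).eq_or_lt with h | h
  · rw [← h, zero_mul, zero_mul]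
  have hbi := hab i hi h
  have hB : 0 < ∑ j ∈ s, b j := hbi.trans_le (single_le_sum hb hi)
  rw [((div_eq_div_iff hbi.ne' hB.ne').2 (hprop i hi)).symm]

end LogSum

section MapSnd

variable {U Y T : Type*}

def mapSnd [Fintype Y] (τ : Y → T) (q : U × Y → ℝ) (z : U × T) : ℝ :=
  ∑ y ∈ univ.filter (fun y => τ y = z.2), q (z.1, y)

lemma margX_mapSnd [Fintype Y] [Fintype T] (τ : Y → T) (q : U × Y → ℝ) :
    margX (mapSnd τ q) = margX q :=
  funext fun u => sum_fiberwise univ τ fun y => q (u, y)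

lemma margY_mapSnd [Fintype U] [Fintype Y] (τ : Y → T) (q : U × Y → ℝ) (t0 : T) :
    margY (mapSnd τ q) t0 = ∑ y ∈ univ.filter (fun y => τ y = t0), margY q y := by
  simp only [margY, mapSnd]
  exact Finset.sum_comm

variable [Fintype U] [Fintype Y] {q : U × Y → ℝ}

lemma mutInfo_eq_sum_mul_log (hq : ∀ z, 0 ≤ q z) :
    mutInfo q = ∑ z, q z * log (q z / (margX q z.1 * margY q z.2)) := by
  refine sum_congr rfl fun z _ => ?_
  rcases (hq z).lt_or_eq with h | h
  · exact if_pos h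
  · simp [← h]

lemma mul_margX_margY_pos (hq : ∀ z, 0 ≤ q z) {z : U × Y} (h : 0 < q z) :
    0 < margX q z.1 * margY q z.2 :=
  mul_pos (h.trans_le (single_le_sum (fun y _ => hq (z.1, y)) (mem_univ z.2)))
    (h.trans_le (single_le_sum (fun u _ => hq (u, z.2)) (mem_univ z.1)))

lemma mutInfo_eq_sum_fiberwise [Fintype T] (hq : ∀ z, 0 ≤ q z) (τ : Y → T) :
    mutInfo q = ∑ u, ∑ t0, ∑ y ∈ univ.filter (fun y => τ y = t0),
      q (u, y) * log (q (u, y) / (margX q u * margY q y)) := by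
  rw [mutInfo_eq_sum_mul_log hq, Fintype.sum_prod_type]
  exact sum_congr rfl fun u _ => (sum_fiberwise univ τ _).symm

lemma mutInfo_mapSnd_eq_sum [Fintype T] (hq : ∀ z, 0 ≤ q z) (τ : Y → T) :
    mutInfo (mapSnd τ q) = ∑ u, ∑ t0,
      (∑ y ∈ univ.filter (fun y => τ y = t0), q (u, y)) *
        log ((∑ y ∈ univ.filter (fun y => τ y = t0), q (u, y)) /
          ∑ y ∈ univ.filter (fun y => τ y = t0), margX q u * margY q y) := by
  rw [mutInfo_eq_sum_mul_log (q := mapSnd τ q) fun z => sum_nonneg fun y _ => hq (z.1, y),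
    Fintype.sum_prod_type]
  simp only [margX_mapSnd, margY_mapSnd, ← mul_sum]
  rfl

theorem mutInfo_mapSnd_le [Fintype T] (hq : ∀ z, 0 ≤ q z) (τ : Y → T) :
    mutInfo (mapSnd τ q) ≤ mutInfo q := by
  rw [mutInfo_mapSnd_eq_sum hq, mutInfo_eq_sum_fiberwise hq τ]
  exact sum_le_sum fun u _ => sum_le_sum fun t0 _ =>
    mul_log_sum_div_sum_le (fun y _ => hq _)
      (fun y _ => mul_nonneg (sum_nonneg fun _ _ => hq _) (sum_nonneg fun _ _ => hq _))
      (fun y _ h => mul_margX_margY_pos hq h)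

/-- The Markov chain `U - τ(Y) - Y` makes the summands of the log-sum inequality proportional on
each fibre of `τ`, so it holds with equality. -/
theorem mutInfo_mapSnd_of_suffT [Fintype T] (hq : ∀ z, 0 ≤ q z) {τ : Y → T} (h : SuffT q τ) :
    mutInfo (mapSnd τ q) = mutInfo q := by
  rw [mutInfo_mapSnd_eq_sum hq, mutInfo_eq_sum_fiberwise hq τ]
  refine sum_congr rfl fun u _ => sum_congr rfl fun t0 _ =>
    mul_log_sum_div_sum_eq (fun y _ => hq _)
      (fun y _ => mul_nonneg (sum_nonneg fun _ _ => hq _) (sum_nonneg fun _ _ => hq _))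
      (fun y _ h => mul_margX_margY_pos hq h) fun y hy => ?_
  rw [mul_sum, sum_mul]
  refine sum_congr rfl fun y' hy' => ?_
  linear_combination margX q u *
    h u y y' ((mem_filter.1 hy).2.trans (mem_filter.1 hy').2.symm)

end MapSnd

section InformationBottleneck

variable {A B U : Type*}

def ibJointSource [Fintype B] (m : A × B → ℝ) (r : A → U → ℝ) (z : U × A) : ℝ :=
  r z.2 z.1 * margX m z.2

def ibJointRelevant [Fintype A] (m : A × B → ℝ) (r : A → U → ℝ) (z : U × B) : ℝ :=
  ∑ a, r a z.1 * m (a, z.2)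

def ibObjective [Fintype A] [Fintype B] [Fintype U] (m : A × B → ℝ) (β : ℝ)
    (r : A → U → ℝ) : ℝ :=
  mutInfo (ibJointSource m r) - β * mutInfo (ibJointRelevant m r)

lemma ibL_eq_sInf_ibObjective [Fintype A] [Fintype B] (m : A × B → ℝ) (β : ℝ) :
    ibL m β = sInf {c | ∃ (n : ℕ) (r : A → Fin n → ℝ),
      (∀ a u, 0 ≤ r a u) ∧ (∀ a, ∑ u, r a u = 1) ∧ c = ibObjective m β r} := rfl

variable {m : A × B → ℝ} {r : A → U → ℝ}

lemma ibJointSource_nonneg [Fintype B] (hm : ∀ z, 0 ≤ m z) (hr : ∀ a u, 0 ≤ r a u)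
    (z : U × A) : 0 ≤ ibJointSource m r z :=
  mul_nonneg (hr _ _) (sum_nonneg fun _ _ => hm _)

lemma ibJointRelevant_nonneg [Fintype A] (hm : ∀ z, 0 ≤ m z) (hr : ∀ a u, 0 ≤ r a u)
    (z : U × B) : 0 ≤ ibJointRelevant m r z :=
  sum_nonneg fun _ _ => mul_nonneg (hr _ _) (hm _)

lemma margY_ibJointSource [Fintype B] [Fintype U] (hr : ∀ a, ∑ u, r a u = 1) (a : A) :
    margY (ibJointSource m r) a = margX m a := by
  simp only [margY, ibJointSource, ← sum_mul, hr, one_mul]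

lemma margY_ibJointRelevant [Fintype A] [Fintype U] (hr : ∀ a, ∑ u, r a u = 1) (b : B) :
    margY (ibJointRelevant m r) b = margY m b := by
  simp only [margY, ibJointRelevant]
  rw [sum_comm]
  simp only [← sum_mul, hr, one_mul]

lemma suffT_ibJointSource_comp [Fintype B] [Fintype U] {S : Type*} {r : S → U → ℝ}
    (hr : ∀ s0, ∑ u, r s0 u = 1) (s : A → S) : SuffT (ibJointSource m fun a => r (s a)) s := by
  intro u a a' h
  rw [margY_ibJointSource fun a => hr (s a), margY_ibJointSource fun a => hr (s a)]
  simp only [ibJointSource, h]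
  ring

lemma suffT_ibJointRelevant [Fintype A] [Fintype B] [Fintype U] {T : Type*} {t : B → T}
    (hr : ∀ a, ∑ u, r a u = 1) (ht : SuffT m t) : SuffT (ibJointRelevant m r) t := by
  intro u b b' h
  rw [margY_ibJointRelevant hr, margY_ibJointRelevant hr]
  simp only [ibJointRelevant, sum_mul]
  refine sum_congr rfl fun a _ => ?_
  rw [mul_assoc, ht a b b' h, mul_assoc]

end InformationBottleneck

section SufficientStatistics

variable [Fintype 𝒳] [Fintype 𝒴] {U : Type*}
  (p : 𝒳 × 𝒴 → ℝ) (s : 𝒳 → 𝒮) (t : 𝒴 → 𝒯)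

lemma margX_margST [Fintype 𝒯] (s0 : 𝒮) : margX (margST p s t) s0 = margS p s s0 := by
  simp only [margX, margST, margS]
  rw [Finset.sum_comm]
  exact sum_congr rfl fun x _ => sum_fiberwise univ t fun y => p (x, y)

lemma sum_mul_margST [Fintype 𝒮] (g : 𝒮 → ℝ) (t0 : 𝒯) :
    ∑ s0, g s0 * margST p s t (s0, t0)
      = ∑ y ∈ univ.filter (fun y => t y = t0), ∑ x, g (s x) * p (x, y) := by
  calc ∑ s0, g s0 * margST p s t (s0, t0)
      = ∑ s0, ∑ x ∈ univ.filter (fun x => s x = s0),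
          ∑ y ∈ univ.filter (fun y => t y = t0), g (s x) * p (x, y) := by
        simp only [margST, mul_sum]
        refine sum_congr rfl fun s0 _ => sum_congr rfl fun x hx => ?_
        rw [(mem_filter.1 hx).2]
    _ = _ := by
        rw [sum_fiberwise univ s fun x =>
          ∑ y ∈ univ.filter (fun y => t y = t0), g (s x) * p (x, y)]
        exact Finset.sum_comm

lemma ibJointSource_margST [Fintype 𝒯] {r : 𝒮 → U → ℝ} {r' : 𝒳 → U → ℝ}
    (h : ∀ s0 u, r s0 u * margS p s s0
      = ∑ x ∈ univ.filter (fun x => s x = s0), r' x u * margX p x) :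
    ibJointSource (margST p s t) r = mapSnd s (ibJointSource p r') := by
  funext z
  rw [ibJointSource, margX_margST, h]
  rfl

lemma ibJointRelevant_margST [Fintype 𝒮] {r : 𝒮 → U → ℝ} {r' : 𝒳 → U → ℝ}
    (h : ∀ u y, ∑ x, r (s x) u * p (x, y) = ∑ x, r' x u * p (x, y)) :
    ibJointRelevant (margST p s t) r = mapSnd t (ibJointRelevant p r') := by
  funext z
  rw [ibJointRelevant, sum_mul_margST]
  exact sum_congr rfl fun y _ => h _ _

/-- The conditional law of `U` given `S = s0` when `U` is drawn from `r` given `X`; on a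
`p`-null fibre of `s` any law will do, and `r x₀` is used. -/
def fiberAverage (r : 𝒳 → U → ℝ) (x₀ : 𝒳) (s0 : 𝒮) (u : U) : ℝ :=
  if 0 < margS p s s0 then
    (∑ x ∈ univ.filter (fun x => s x = s0), r x u * margX p x) / margS p s s0
  else r x₀ u

variable {p s} {r : 𝒳 → U → ℝ}

lemma margX_eq_zero_of_not_margS_pos (hp : ∀ z, 0 ≤ p z) {s0 : 𝒮} (h : ¬ 0 < margS p s s0)
    {x : 𝒳} (hx : x ∈ univ.filter (fun x => s x = s0)) : margX p x = 0 := by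
  have hX : ∀ x, 0 ≤ margX p x := fun x => sum_nonneg fun y _ => hp (x, y)
  have hS : margS p s s0 = 0 := le_antisymm (not_lt.1 h) (sum_nonneg fun x _ => hX x)
  exact (sum_eq_zero_iff_of_nonneg fun x _ => hX x).1 hS x hx

lemma fiberAverage_nonneg (hp : ∀ z, 0 ≤ p z) (hr : ∀ x u, 0 ≤ r x u) (x₀ : 𝒳) (s0 : 𝒮)
    (u : U) : 0 ≤ fiberAverage p s r x₀ s0 u := by
  unfold fiberAverage
  split_ifs with h
  · exact div_nonneg
      (sum_nonneg fun x _ => mul_nonneg (hr x u) (sum_nonneg fun y _ => hp _)) h.le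
  · exact hr x₀ u

lemma sum_fiberAverage [Fintype U] (hr : ∀ x, ∑ u, r x u = 1) (x₀ : 𝒳) (s0 : 𝒮) :
    ∑ u, fiberAverage p s r x₀ s0 u = 1 := by
  unfold fiberAverage
  split_ifs with h
  · rw [← sum_div, Finset.sum_comm]
    simp only [← sum_mul, hr, one_mul]
    exact div_self h.ne'
  · exact hr x₀

lemma fiberAverage_mul_margS (hp : ∀ z, 0 ≤ p z) (x₀ : 𝒳) (s0 : 𝒮) (u : U) :
    fiberAverage p s r x₀ s0 u * margS p s s0
      = ∑ x ∈ univ.filter (fun x => s x = s0), r x u * margX p x := by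
  unfold fiberAverage
  split_ifs with h
  · exact div_mul_cancel₀ _ h.ne'
  · have hX := fun x hx => margX_eq_zero_of_not_margS_pos hp h (x := x) hx
    rw [margS, sum_eq_zero hX, mul_zero, sum_eq_zero fun x hx => by rw [hX x hx, mul_zero]]

/-- Sufficiency of `s` makes `p(x, y) / pX(x)` constant on each fibre of `s`, so averaging the
encoder over a fibre does not change the joint law of `(U, Y)`. -/
lemma fiberAverage_mul_sum_fiber (hp : ∀ z, 0 ≤ p z) (hs : SuffS p s) (x₀ : 𝒳) (s0 : 𝒮)
    (u : U) (y : 𝒴) :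
    fiberAverage p s r x₀ s0 u * ∑ x ∈ univ.filter (fun x => s x = s0), p (x, y)
      = ∑ x ∈ univ.filter (fun x => s x = s0), r x u * p (x, y) := by
  unfold fiberAverage
  split_ifs with h
  · rw [div_mul_eq_mul_div, div_eq_iff h.ne']
    simp only [sum_mul]
    refine sum_congr rfl fun x hx => ?_
    have key : margX p x * ∑ x' ∈ univ.filter (fun x => s x = s0), p (x', y)
        = p (x, y) * margS p s s0 := by
      simp only [margS, mul_sum]
      exact sum_congr rfl fun x' hx' => by
        linear_combination -hs x x' y ((mem_filter.1 hx).2.trans (mem_filter.1 hx').2.symm)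
    linear_combination r x u * key
  · have hzero : ∀ x ∈ univ.filter (fun x => s x = s0), p (x, y) = 0 := fun x hx =>
      (sum_eq_zero_iff_of_nonneg fun y _ => hp _).1
        (margX_eq_zero_of_not_margS_pos hp h hx) y (mem_univ y)
    rw [sum_eq_zero hzero, mul_zero, sum_eq_zero fun x hx => by rw [hzero x hx, mul_zero]]

lemma sum_fiberAverage_comp_mul [Fintype 𝒮] (hp : ∀ z, 0 ≤ p z) (hs : SuffS p s) (x₀ : 𝒳)
    (u : U) (y : 𝒴) :
    ∑ x, fiberAverage p s r x₀ (s x) u * p (x, y) = ∑ x, r x u * p (x, y) := by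
  rw [← sum_fiberwise univ s fun x => fiberAverage p s r x₀ (s x) u * p (x, y),
    ← sum_fiberwise univ s fun x => r x u * p (x, y)]
  refine sum_congr rfl fun s0 _ => ?_
  rw [← fiberAverage_mul_sum_fiber (r := r) hp hs x₀ s0 u y, mul_sum]
  exact sum_congr rfl fun x hx => by rw [(mem_filter.1 hx).2]

variable [Fintype 𝒮] [Fintype 𝒯] [Fintype U] {t}

theorem ibObjective_margST_eq_comp (hp : ∀ z, 0 ≤ p z) (ht : SuffT p t) {r : 𝒮 → U → ℝ}
    (hr0 : ∀ s0 u, 0 ≤ r s0 u) (hr1 : ∀ s0, ∑ u, r s0 u = 1) (β : ℝ) :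
    ibObjective (margST p s t) β r = ibObjective p β fun x => r (s x) := by
  have hsrc : ∀ s0 u, r s0 u * margS p s s0
      = ∑ x ∈ univ.filter (fun x => s x = s0), r (s x) u * margX p x := fun s0 u => by
    rw [margS, mul_sum]
    exact sum_congr rfl fun x hx => by rw [(mem_filter.1 hx).2]
  rw [ibObjective, ibObjective, ibJointSource_margST p s t hsrc,
    ibJointRelevant_margST p s t fun _ _ => rfl,
    mutInfo_mapSnd_of_suffT (ibJointSource_nonneg hp fun x => hr0 (s x))
      (suffT_ibJointSource_comp hr1 s),
    mutInfo_mapSnd_of_suffT (ibJointRelevant_nonneg hp fun x => hr0 (s x))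
      (suffT_ibJointRelevant (fun x => hr1 (s x)) ht)]

theorem ibObjective_margST_fiberAverage_le (hp : ∀ z, 0 ≤ p z) (hs : SuffS p s)
    (ht : SuffT p t) (hr0 : ∀ x u, 0 ≤ r x u) (hr1 : ∀ x, ∑ u, r x u = 1) (x₀ : 𝒳) (β : ℝ) :
    ibObjective (margST p s t) β (fiberAverage p s r x₀) ≤ ibObjective p β r := by
  rw [ibObjective, ibObjective, ibJointSource_margST p s t (fiberAverage_mul_margS hp x₀),
    ibJointRelevant_margST p s t (sum_fiberAverage_comp_mul hp hs x₀),
    mutInfo_mapSnd_of_suffT (ibJointRelevant_nonneg hp hr0) (suffT_ibJointRelevant hr1 ht)]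
  exact sub_le_sub_right (mutInfo_mapSnd_le (ibJointSource_nonneg hp hr0) s) _

end SufficientStatistics

theorem ib_lagrangian_preserved_general
    [Fintype 𝒳] [Nonempty 𝒳] [Fintype 𝒴]
    [Fintype 𝒮] [Fintype 𝒯]
    (p : 𝒳 × 𝒴 → ℝ) (hp : IsPMF p)
    (s : 𝒳 → 𝒮) (t : 𝒴 → 𝒯)
    (hs : SuffS p s) (ht : SuffT p t)
    (β : ℝ) :
    ibL p β = ibL (margST p s t) β := by
  rw [ibL_eq_sInf_ibObjective, ibL_eq_sInf_ibObjective]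
  apply csInf_eq_csInf_of_forall_exists_le
  · rintro _ ⟨n, r, hr0, hr1, rfl⟩
    let x₀ := Classical.arbitrary 𝒳
    exact ⟨_, ⟨n, fiberAverage p s r x₀, fiberAverage_nonneg hp.1 hr0 x₀,
      sum_fiberAverage hr1 x₀, rfl⟩, ibObjective_margST_fiberAverage_le hp.1 hs ht hr0 hr1 x₀ β⟩
  · rintro _ ⟨n, r, hr0, hr1, rfl⟩
    exact ⟨_, ⟨n, fun x => r (s x), fun x => hr0 (s x), fun x => hr1 (s x), rfl⟩,
      (ibObjective_margST_eq_comp hp.1 ht hr0 hr1 β).ge⟩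

/-- The information-bottleneck Lagrangian value is preserved under
sufficient statistics. -/
theorem ib_lagrangian_preserved
    [Fintype 𝒳] [Nonempty 𝒳] [Fintype 𝒴] [Nonempty 𝒴]
    [Fintype 𝒮] [Nonempty 𝒮] [Fintype 𝒯] [Nonempty 𝒯]
    (p : 𝒳 × 𝒴 → ℝ) (hp : IsPMF p)
    (hX : ∀ x, 0 < margX p x) (hY : ∀ y, 0 < margY p y)
    (s : 𝒳 → 𝒮) (t : 𝒴 → 𝒯)
    (hs : SuffS p s) (ht : SuffT p t)
    (β : ℝ) (hβ : 0 < β) :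
    ibL p β = ibL (margST p s t) β :=
  ib_lagrangian_preserved_general p hp s t hs ht β

end
end

section
/- Let 𝒳, 𝒰, 𝒱 be nonempty finite types, m a joint pmf on 𝒳 × 𝒰 whose 𝒳-marginal mX(x) = ∑_u m(x,u) is strictly positive, and v : 𝒳 → 𝒱. Define mV(v0) = ∑_{x : v(x)=v0} mX(x), mUV(u,v0) = ∑_{x : v(x)=v0} m(x,u), and m'(x,u) = mX(x)·mUV(u,v(x))/mV(v(x)). Then m' is a joint pmf on 𝒳 × 𝒰 with 𝒳-marginal mX; its (U,V)-marginal agrees with that of m, i.e. ∑_{x : v(x)=v0} m'(x,u) = mUV(u,v0) for all u, v0; and the Markov relation U'−V−X holds under m': m'(x,u)·mV(v(x)) = mX(x)·(∑_{x' : v(x')=v(x)} m'(x',u)) for all x, u. -/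
open Finset

noncomputable section
open scoped Classical

variable {𝒳 𝒴 𝒮 𝒯 : Type*}

/-- Marginal of a joint pmf `m` on `𝒳 × 𝒰` on its first coordinate. -/
def mMargX {𝒰 : Type*} [Fintype 𝒰] (m : 𝒳 × 𝒰 → ℝ) (x : 𝒳) : ℝ := ∑ u, m (x, u)

/-- Joint distribution of `(U, V) = (U, v(X))`. -/
def mMargUV {𝒰 𝒱 : Type*} [Fintype 𝒳] (m : 𝒳 × 𝒰 → ℝ) (v : 𝒳 → 𝒱)
    (u : 𝒰) (v0 : 𝒱) : ℝ :=
  ∑ x ∈ Finset.univ.filter (fun x => v x = v0), m (x, u)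

/-- Distribution of `V = v(X)`. -/
def mMargV {𝒰 𝒱 : Type*} [Fintype 𝒳] [Fintype 𝒰] (m : 𝒳 × 𝒰 → ℝ) (v : 𝒳 → 𝒱)
    (v0 : 𝒱) : ℝ :=
  ∑ x ∈ Finset.univ.filter (fun x => v x = v0), mMargX m x

/-- The constructed joint pmf `m'(x,u) = mX(x) · mUV(u, v(x)) / mV(v(x))`. -/
def mPrime {𝒰 𝒱 : Type*} [Fintype 𝒳] [Fintype 𝒰] (m : 𝒳 × 𝒰 → ℝ) (v : 𝒳 → 𝒱)
    (z : 𝒳 × 𝒰) : ℝ :=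
  mMargX m z.1 * mMargUV m v z.2 (v z.1) / mMargV m v (v z.1)

/-! Summing `m'` over `u` gives `mX(x) · mV(v x) / mV(v x)`, and summing it over a fibre of `v`
gives `mV(v0) · mUV(u, v0) / mV(v0)`; the Markov relation is `m'(x,u) · mV(v x) = mX(x) · mUV(u, v x)`.
All three cancellations are valid even where `mV` vanishes (and `x / 0 = 0`), because both `mX` and
`mUV` are dominated by `mV`. -/

section Construction

variable {𝒰 𝒱 : Type*} {m : 𝒳 × 𝒰 → ℝ} (v : 𝒳 → 𝒱)

theorem mMargX_nonneg [Fintype 𝒰] (hm : ∀ z, 0 ≤ m z) (x : 𝒳) : 0 ≤ mMargX m x :=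
  sum_nonneg fun _ _ => hm _

theorem mMargUV_nonneg [Fintype 𝒳] (hm : ∀ z, 0 ≤ m z) (u : 𝒰) (v0 : 𝒱) :
    0 ≤ mMargUV m v u v0 :=
  sum_nonneg fun _ _ => hm _

variable [Fintype 𝒳] [Fintype 𝒰]

theorem sum_mMargX (p : 𝒳 × 𝒰 → ℝ) : ∑ x, mMargX p x = ∑ z, p z :=
  (Fintype.sum_prod_type p).symm

theorem sum_mMargUV (m : 𝒳 × 𝒰 → ℝ) (v0 : 𝒱) : ∑ u, mMargUV m v u v0 = mMargV m v v0 :=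
  Finset.sum_comm

theorem mMargV_nonneg (hm : ∀ z, 0 ≤ m z) (v0 : 𝒱) : 0 ≤ mMargV m v v0 :=
  sum_nonneg fun x _ => mMargX_nonneg hm x

theorem mMargX_le_mMargV (hm : ∀ z, 0 ≤ m z) (x : 𝒳) : mMargX m x ≤ mMargV m v (v x) :=
  single_le_sum (fun x' _ => mMargX_nonneg hm x') (by simp)

theorem mMargUV_le_mMargV (hm : ∀ z, 0 ≤ m z) (u : 𝒰) (v0 : 𝒱) :
    mMargUV m v u v0 ≤ mMargV m v v0 :=
  sum_mMargUV v m v0 ▸ single_le_sum (fun u' _ => mMargUV_nonneg v hm u' v0) (mem_univ u)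

theorem mMargX_eq_zero_of_mMargV_eq_zero (hm : ∀ z, 0 ≤ m z) {x : 𝒳}
    (h : mMargV m v (v x) = 0) : mMargX m x = 0 :=
  le_antisymm (h ▸ mMargX_le_mMargV v hm x) (mMargX_nonneg hm x)

theorem mMargUV_eq_zero_of_mMargV_eq_zero (hm : ∀ z, 0 ≤ m z) (u : 𝒰) {v0 : 𝒱}
    (h : mMargV m v v0 = 0) : mMargUV m v u v0 = 0 :=
  le_antisymm (h ▸ mMargUV_le_mMargV v hm u v0) (mMargUV_nonneg v hm u v0)

theorem mPrime_nonneg (hm : ∀ z, 0 ≤ m z) (z : 𝒳 × 𝒰) : 0 ≤ mPrime m v z :=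
  div_nonneg (mul_nonneg (mMargX_nonneg hm z.1) (mMargUV_nonneg v hm z.2 _)) (mMargV_nonneg v hm _)

theorem mMargX_mPrime (hm : ∀ z, 0 ≤ m z) (x : 𝒳) : mMargX (mPrime m v) x = mMargX m x :=
  calc mMargX (mPrime m v) x = mMargX m x * mMargV m v (v x) / mMargV m v (v x) := by
        rw [mMargX]; simp only [mPrime]; rw [← sum_div, ← mul_sum, sum_mMargUV]
    _ = mMargX m x := mul_div_cancel_of_imp (mMargX_eq_zero_of_mMargV_eq_zero v hm)

theorem sum_filter_mPrime (hm : ∀ z, 0 ≤ m z) (u : 𝒰) (v0 : 𝒱) :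
    ∑ x ∈ univ.filter (fun x => v x = v0), mPrime m v (x, u) = mMargUV m v u v0 :=
  calc ∑ x ∈ univ.filter (fun x => v x = v0), mPrime m v (x, u)
      = ∑ x ∈ univ.filter (fun x => v x = v0), mMargX m x * mMargUV m v u v0 / mMargV m v v0 :=
        sum_congr rfl fun x hx => by rw [mPrime, (mem_filter.1 hx).2]
    _ = mMargV m v v0 * mMargUV m v u v0 / mMargV m v v0 := by rw [← sum_div, ← sum_mul]; rfl
    _ = mMargUV m v u v0 :=
        mul_div_cancel_left_of_imp (mMargUV_eq_zero_of_mMargV_eq_zero v hm u)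

theorem mPrime_mul_mMargV (hm : ∀ z, 0 ≤ m z) (x : 𝒳) (u : 𝒰) :
    mPrime m v (x, u) * mMargV m v (v x) = mMargX m x * mMargUV m v u (v x) :=
  div_mul_cancel_of_imp fun h => by rw [mMargX_eq_zero_of_mMargV_eq_zero v hm h, zero_mul]

theorem IsPMF.mPrime (hm : IsPMF m) : IsPMF (mPrime m v) :=
  ⟨mPrime_nonneg v hm.1, by
    rw [← sum_mMargX, ← hm.2, ← sum_mMargX]
    exact sum_congr rfl fun x _ => mMargX_mPrime v hm.1 x⟩

end Construction

theorem construction_lemma_general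
    {𝒳 𝒰 𝒱 : Type*}
    [Fintype 𝒳] [Fintype 𝒰]
    (m : 𝒳 × 𝒰 → ℝ) (hm : IsPMF m)
    (v : 𝒳 → 𝒱) :
    IsPMF (mPrime m v) ∧
    (∀ x, ∑ u, mPrime m v (x, u) = mMargX m x) ∧
    (∀ u v0, (∑ x ∈ Finset.univ.filter (fun x => v x = v0), mPrime m v (x, u))
      = mMargUV m v u v0) ∧
    (∀ x u, mPrime m v (x, u) * mMargV m v (v x)
      = mMargX m x
        * ∑ x' ∈ Finset.univ.filter (fun x' => v x' = v x), mPrime m v (x', u)) :=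
  ⟨hm.mPrime v, mMargX_mPrime v hm.1, sum_filter_mPrime v hm.1, fun x u => by
    rw [sum_filter_mPrime v hm.1, mPrime_mul_mMargV v hm.1]⟩

/-- The construction `m'` is a pmf with the same `X`-marginal and
the same `(U,V)`-marginal as `m`, and satisfies the Markov relation `U' - V - X`. -/
theorem construction_lemma
    {𝒳 𝒰 𝒱 : Type*}
    [Fintype 𝒳] [Nonempty 𝒳] [Fintype 𝒰] [Nonempty 𝒰] [Fintype 𝒱] [Nonempty 𝒱]
    (m : 𝒳 × 𝒰 → ℝ) (hm : IsPMF m)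
    (hmX : ∀ x, 0 < mMargX m x)
    (v : 𝒳 → 𝒱) :
    IsPMF (mPrime m v) ∧
    (∀ x, ∑ u, mPrime m v (x, u) = mMargX m x) ∧
    (∀ u v0, (∑ x ∈ Finset.univ.filter (fun x => v x = v0), mPrime m v (x, u))
      = mMargUV m v u v0) ∧
    (∀ x u, mPrime m v (x, u) * mMargV m v (v x)
      = mMargX m x
        * ∑ x' ∈ Finset.univ.filter (fun x' => v x' = v x), mPrime m v (x', u)) :=
  construction_lemma_general m hm v

end
end

section
/- Suppose s : 𝒳 → 𝒮 is sufficient (X−S−Y). Let 𝒰 be a nonempty finite type and q a joint pmf on 𝒰 × 𝒳 × 𝒴 whose (𝒳,𝒴)-marginal is p and which satisfies U−X−Y: q(u,x,y)·pX(x) = qUX(u,x)·p(x,y) for all u,x,y, where qUX(u,x) = ∑_y q(u,x,y). Then there exists a joint pmf q' on 𝒰 × 𝒳 × 𝒴 with (𝒳,𝒴)-marginal p such that: (i) the chain U−S−X−Y holds: q'(u,x,y)·pS(s(x)) = q'US(u,s(x))·p(x,y) for all u,x,y, where q'US(u,s0) = ∑_{x : s(x)=s0} ∑_y q'(u,x,y);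 (ii) q'US = qUS; (iii) q'UY = qUY, where qUY(u,y) = ∑_x q(u,x,y); (iv) I_{q'}(U;X) = I_q(U;X) − I_q(U;X|S), where I_q(U;X|S) = ∑_{(u,x) : qUX(u,x)>0} qUX(u,x)·log( qUX(u,x)·pS(s(x)) / (qUS(u,s(x))·pX(x)) ); and (v) I_{q'}(U;Y) = I_q(U;Y). -/
/-!
Replace `U` by `U'`, drawn from the conditional law of `U` given `S` alone. Then `U' - S - X - Y`
holds by construction and `(U', S) ∼ (U, S)`. The `(U', X)`-law arises from the `(U, X)`-law by
redistributing the mass of each fibre of `s` proportionally to `p_X`, which leaves unchanged the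
integral of any function of `(u, x)` that depends on `x` only through `s(x)`. By sufficiency
`p(y | x)` is such a function, whence `(U', Y) ∼ (U, Y)`; and so is the pointwise mutual
information of `(U, S)`, whence `I(U'; X) = I(U'; S) = I(U; S) = I(U; X) - I(U; X | S)`.
-/

open Finset

noncomputable section
open scoped Classical

variable {𝒳 𝒴 𝒮 𝒯 : Type*}

section IBConstruction

variable {𝒰 : Type*}

/-- Joint distribution of `(U, X)` under a joint pmf `q` on `𝒰 × 𝒳 × 𝒴`. -/
def margUX [Fintype 𝒴] (q : 𝒰 × 𝒳 × 𝒴 → ℝ) (u : 𝒰) (x : 𝒳) : ℝ :=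
  ∑ y, q (u, x, y)

/-- Joint distribution of `(U, Y)` under a joint pmf `q` on `𝒰 × 𝒳 × 𝒴`. -/
def margUY [Fintype 𝒳] (q : 𝒰 × 𝒳 × 𝒴 → ℝ) (u : 𝒰) (y : 𝒴) : ℝ :=
  ∑ x, q (u, x, y)

/-- Joint distribution of `(U, S) = (U, s(X))` under a joint pmf `q` on `𝒰 × 𝒳 × 𝒴`. -/
def margUS [Fintype 𝒳] [Fintype 𝒴] (q : 𝒰 × 𝒳 × 𝒴 → ℝ) (s : 𝒳 → 𝒮)
    (u : 𝒰) (s0 : 𝒮) : ℝ :=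
  ∑ x ∈ Finset.univ.filter (fun x => s x = s0), margUX q u x

section Fibers

variable {ι κ : Type*} [Fintype ι]

def fiberSum (s : ι → κ) (f : ι → ℝ) (a : κ) : ℝ :=
  ∑ j ∈ univ.filter (fun j => s j = a), f j

theorem single_le_fiberSum (s : ι → κ) {f : ι → ℝ} (hf : ∀ i, 0 ≤ f i) (i : ι) :
    f i ≤ fiberSum s f (s i) :=
  single_le_sum (fun j _ => hf j) (mem_filter.2 ⟨mem_univ i, rfl⟩)

theorem fiberSum_le_sum (s : ι → κ) {f : ι → ℝ} (hf : ∀ i, 0 ≤ f i) (a : κ) :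
    fiberSum s f a ≤ ∑ i, f i :=
  sum_le_sum_of_subset_of_nonneg (filter_subset _ _) fun j _ _ => hf j

/-- Redistributing `f` within each fibre of `s` proportionally to `w` leaves the integral of
every function constant on the fibres unchanged. -/
theorem sum_fiberSum_mul_div_fiberSum_mul (s : ι → κ) (f w h : ι → ℝ)
    (hw : ∀ i, fiberSum s w (s i) ≠ 0) (hh : ∀ i j, s i = s j → h i = h j) :
    ∑ i, fiberSum s f (s i) * w i / fiberSum s w (s i) * h i = ∑ i, f i * h i := by
  calc ∑ i, fiberSum s f (s i) * w i / fiberSum s w (s i) * h i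
      = ∑ i, ∑ j ∈ univ.filter (fun j => s j = s i),
          f j * h j * (w i / fiberSum s w (s j)) := by
        refine sum_congr rfl fun i _ => ?_
        rw [fiberSum, sum_mul, sum_div, sum_mul]
        refine sum_congr rfl fun j hj => ?_
        have hji : s j = s i := (mem_filter.1 hj).2
        rw [hji, hh i j hji.symm]
        ring
    _ = ∑ j, ∑ i ∈ univ.filter (fun i => s i = s j),
          f j * h j * (w i / fiberSum s w (s j)) :=
        sum_comm' fun i j => by simp [eq_comm]
    _ = ∑ j, f j * h j := by
        refine sum_congr rfl fun j _ => ?_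
        rw [← mul_sum, ← sum_div, ← fiberSum, div_self (hw j), mul_one]

end Fibers

theorem ite_pos_mul_eq_mul {a b c : ℝ} (ha : 0 ≤ a) (h : 0 < a → b = c) :
    (if 0 < a then a * b else 0) = a * c := by
  split_ifs with hpos
  · rw [h hpos]
  · rw [le_antisymm (not_lt.1 hpos) ha, zero_mul]

section RouteThroughS

variable {p : 𝒳 × 𝒴 → ℝ} {s : 𝒳 → 𝒮} {q : 𝒰 × 𝒳 × 𝒴 → ℝ}

theorem margUX_nonneg [Fintype 𝒴] (hq : ∀ z, 0 ≤ q z) (u : 𝒰) (x : 𝒳) : 0 ≤ margUX q u x :=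
  sum_nonneg fun _ _ => hq _

theorem sum_margUX [Fintype 𝒴] [Fintype 𝒰] (hmarg : ∀ x y, ∑ u, q (u, x, y) = p (x, y))
    (x : 𝒳) : ∑ u, margUX q u x = margX p x := by
  simp only [margUX, margX]
  rw [sum_comm]
  exact sum_congr rfl fun y _ => hmarg x y

variable [Fintype 𝒳] [Fintype 𝒴]

/-- The law of `(U', X, Y)` where `(X, Y) ∼ p` and `U'` is drawn from the conditional law of
`U` given `S = s(X)` under `q`, independently of `(X, Y)` given `S`. -/
def routeThroughS (p : 𝒳 × 𝒴 → ℝ) (s : 𝒳 → 𝒮) (q : 𝒰 × 𝒳 × 𝒴 → ℝ) : 𝒰 × 𝒳 × 𝒴 → ℝ :=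
  fun z => margUS q s z.1 (s z.2.1) * p z.2 / margS p s (s z.2.1)

theorem margS_pos (hX : ∀ x, 0 < margX p x) (x : 𝒳) : 0 < margS p s (s x) :=
  (hX x).trans_le (single_le_fiberSum s (fun x => (hX x).le) x)

theorem margUS_nonneg (hq : ∀ z, 0 ≤ q z) (u : 𝒰) (a : 𝒮) : 0 ≤ margUS q s u a :=
  sum_nonneg fun x _ => margUX_nonneg hq u x

theorem sum_margUS [Fintype 𝒰] (hmarg : ∀ x y, ∑ u, q (u, x, y) = p (x, y)) (a : 𝒮) :
    ∑ u, margUS q s u a = margS p s a := by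
  simp only [margUS, margS]
  rw [sum_comm]
  exact sum_congr rfl fun x _ => sum_margUX hmarg x

theorem routeThroughS_nonneg (hp : ∀ z, 0 ≤ p z) (hX : ∀ x, 0 < margX p x)
    (hq : ∀ z, 0 ≤ q z) (z : 𝒰 × 𝒳 × 𝒴) : 0 ≤ routeThroughS p s q z :=
  div_nonneg (mul_nonneg (margUS_nonneg hq _ _) (hp _)) (margS_pos hX _).le

theorem sum_routeThroughS_fst [Fintype 𝒰] (hX : ∀ x, 0 < margX p x)
    (hmarg : ∀ x y, ∑ u, q (u, x, y) = p (x, y)) (x : 𝒳) (y : 𝒴) :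
    ∑ u, routeThroughS p s q (u, x, y) = p (x, y) := by
  simp only [routeThroughS]
  rw [← sum_div, ← sum_mul, sum_margUS hmarg, mul_div_cancel_left₀ _ (margS_pos hX x).ne']

theorem isPMF_routeThroughS [Fintype 𝒰] (hp : IsPMF p) (hX : ∀ x, 0 < margX p x)
    (hq : ∀ z, 0 ≤ q z) (hmarg : ∀ x y, ∑ u, q (u, x, y) = p (x, y)) :
    IsPMF (routeThroughS p s q) := by
  refine ⟨routeThroughS_nonneg hp.1 hX hq, ?_⟩
  rw [Fintype.sum_prod_type, sum_comm, ← hp.2]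
  exact sum_congr rfl fun w _ => sum_routeThroughS_fst hX hmarg w.1 w.2

theorem margUX_routeThroughS (u : 𝒰) (x : 𝒳) :
    margUX (routeThroughS p s q) u x = margUS q s u (s x) * margX p x / margS p s (s x) := by
  simp only [margUX, routeThroughS, margX]
  rw [← sum_div, ← mul_sum]

theorem sum_margUX_routeThroughS_mul (hX : ∀ x, 0 < margX p x) (u : 𝒰) {h : 𝒳 → ℝ}
    (hh : ∀ x x', s x = s x' → h x = h x') :
    ∑ x, margUX (routeThroughS p s q) u x * h x = ∑ x, margUX q u x * h x := by
  simp only [margUX_routeThroughS]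
  exact sum_fiberSum_mul_div_fiberSum_mul s (margUX q u) (margX p) h
    (fun x => (margS_pos hX x).ne') hh

theorem margUS_routeThroughS (hX : ∀ x, 0 < margX p x) (u : 𝒰) (a : 𝒮) :
    margUS (routeThroughS p s q) s u a = margUS q s u a := by
  have key : ∑ x, margUX (routeThroughS p s q) u x * (if s x = a then 1 else 0)
      = ∑ x, margUX q u x * (if s x = a then 1 else 0) :=
    sum_margUX_routeThroughS_mul hX u fun x x' hxx' => by rw [hxx']
  simpa only [margUS, mul_boole, ← sum_filter] using key

theorem routeThroughS_markov (hX : ∀ x, 0 < margX p x) (u : 𝒰) (x : 𝒳) (y : 𝒴) :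
    routeThroughS p s q (u, x, y) * margS p s (s x)
      = margUS (routeThroughS p s q) s u (s x) * p (x, y) := by
  rw [margUS_routeThroughS hX, routeThroughS, div_mul_cancel₀ _ (margS_pos hX x).ne']

theorem margUY_routeThroughS (hX : ∀ x, 0 < margX p x) (hs : SuffS p s)
    (hUXY : ∀ u x y, q (u, x, y) * margX p x = margUX q u x * p (x, y)) (u : 𝒰) (y : 𝒴) :
    margUY (routeThroughS p s q) u y = margUY q u y := by
  have hq' : ∀ x, routeThroughS p s q (u, x, y)
      = margUX (routeThroughS p s q) u x * (p (x, y) / margX p x) := by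
    intro x
    rw [margUX_routeThroughS, routeThroughS]
    field_simp [(hX x).ne']
  have hq : ∀ x, q (u, x, y) = margUX q u x * (p (x, y) / margX p x) := fun x => by
    rw [mul_div_assoc', eq_div_iff (hX x).ne', hUXY]
  simp only [margUY, hq', hq]
  exact sum_margUX_routeThroughS_mul hX u fun x x' hxx' =>
    (div_eq_div_iff (hX x).ne' (hX x').ne').2 (hs x x' y hxx')

end RouteThroughS

def pmiUS [Fintype 𝒳] [Fintype 𝒴] (p : 𝒳 × 𝒴 → ℝ) (s : 𝒳 → 𝒮) (q : 𝒰 × 𝒳 × 𝒴 → ℝ)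
    (u : 𝒰) (a : 𝒮) : ℝ :=
  Real.log (margUS q s u a / ((∑ x, margUX q u x) * margS p s a))

section MutualInformation

variable [Fintype 𝒳] [Fintype 𝒴] [Fintype 𝒰] {p : 𝒳 × 𝒴 → ℝ} {s : 𝒳 → 𝒮}
  {q : 𝒰 × 𝒳 × 𝒴 → ℝ}

theorem mutInfo_margUX_routeThroughS (hp : ∀ z, 0 ≤ p z) (hX : ∀ x, 0 < margX p x)
    (hq : ∀ z, 0 ≤ q z) (hmarg : ∀ x y, ∑ u, q (u, x, y) = p (x, y)) :
    mutInfo (fun z : 𝒰 × 𝒳 => margUX (routeThroughS p s q) z.1 z.2)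
      = ∑ z : 𝒰 × 𝒳, margUX q z.1 z.2 * pmiUS p s q z.1 (s z.2) := by
  have hrow : ∀ u, ∑ x, margUX (routeThroughS p s q) u x = ∑ x, margUX q u x := fun u => by
    simpa only [mul_one] using sum_margUX_routeThroughS_mul hX u (h := fun _ => 1) fun _ _ _ => rfl
  have hcol : ∀ x, ∑ u, margUX (routeThroughS p s q) u x = margX p x :=
    sum_margUX (sum_routeThroughS_fst hX hmarg)
  calc mutInfo (fun z : 𝒰 × 𝒳 => margUX (routeThroughS p s q) z.1 z.2)
      = ∑ z : 𝒰 × 𝒳, margUX (routeThroughS p s q) z.1 z.2 * pmiUS p s q z.1 (s z.2) := by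
        refine sum_congr rfl fun z _ => ite_pos_mul_eq_mul
          (margUX_nonneg (routeThroughS_nonneg hp hX hq) _ _) fun _ => ?_
        dsimp only
        rw [hrow, hcol, margUX_routeThroughS, pmiUS, div_div, ← mul_assoc,
          mul_div_mul_right _ _ (hX z.2).ne', mul_comm (margS p s (s z.2))]
    _ = ∑ z : 𝒰 × 𝒳, margUX q z.1 z.2 * pmiUS p s q z.1 (s z.2) := by
        simp only [Fintype.sum_prod_type]
        exact sum_congr rfl fun u _ =>
          sum_margUX_routeThroughS_mul hX u fun x x' hxx' => by rw [hxx']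

/-- The chain rule `I(U;X) - I(U;X|S) = I(U;S)`, with `I(U;S)` summed over `(u, x)`. -/
theorem mutInfo_margUX_sub_condMutInfo (hX : ∀ x, 0 < margX p x) (hq : ∀ z, 0 ≤ q z)
    (hmarg : ∀ x y, ∑ u, q (u, x, y) = p (x, y)) :
    mutInfo (fun z : 𝒰 × 𝒳 => margUX q z.1 z.2)
      - ∑ z : 𝒰 × 𝒳, (if 0 < margUX q z.1 z.2 then
          margUX q z.1 z.2 * Real.log (margUX q z.1 z.2 * margS p s (s z.2)
            / (margUS q s z.1 (s z.2) * margX p z.2)) else 0)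
      = ∑ z : 𝒰 × 𝒳, margUX q z.1 z.2 * pmiUS p s q z.1 (s z.2) := by
  rw [mutInfo, ← sum_sub_distrib]
  refine sum_congr rfl fun ⟨u, x⟩ _ => ?_
  dsimp only
  rw [sum_margUX hmarg, ite_sub_ite, sub_self, ← mul_sub]
  refine ite_pos_mul_eq_mul (margUX_nonneg hq u x) fun hpos => ?_
  have hUS : 0 < margUS q s u (s x) :=
    hpos.trans_le (single_le_fiberSum s (margUX_nonneg hq u) x)
  have hU : 0 < ∑ x', margUX q u x' :=
    hUS.trans_le (fiberSum_le_sum s (margUX_nonneg hq u) (s x))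
  have hS := margS_pos (s := s) hX x
  have hx := hX x
  rw [pmiUS, ← Real.log_div (by positivity) (by positivity)]
  congr 1
  field_simp

end MutualInformation

theorem ib_construction_general
    [Fintype 𝒳] [Fintype 𝒴]
    (p : 𝒳 × 𝒴 → ℝ) (hp : IsPMF p)
    (hX : ∀ x, 0 < margX p x)
    (s : 𝒳 → 𝒮) (hs : SuffS p s)
    [Fintype 𝒰]
    (q : 𝒰 × 𝒳 × 𝒴 → ℝ) (hq : IsPMF q)
    (hmarg : ∀ x y, ∑ u, q (u, x, y) = p (x, y))
    (hUXY : ∀ u x y, q (u, x, y) * margX p x = margUX q u x * p (x, y)) :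
    ∃ q' : 𝒰 × 𝒳 × 𝒴 → ℝ,
      IsPMF q' ∧
      (∀ x y, ∑ u, q' (u, x, y) = p (x, y)) ∧
      -- (i) Markov chain U' - S - X - Y
      (∀ u x y, q' (u, x, y) * margS p s (s x) = margUS q' s u (s x) * p (x, y)) ∧
      -- (ii) (U', S) ~ (U, S)
      (∀ u s0, margUS q' s u s0 = margUS q s u s0) ∧
      -- (iii) (U', Y) ~ (U, Y)
      (∀ u y, margUY q' u y = margUY q u y) ∧
      -- (iv) I_{q'}(U; X) = I_q(U; X) - I_q(U; X | S)
      mutInfo (fun z : 𝒰 × 𝒳 => margUX q' z.1 z.2)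
        = mutInfo (fun z : 𝒰 × 𝒳 => margUX q z.1 z.2)
          - ∑ z : 𝒰 × 𝒳, (if 0 < margUX q z.1 z.2 then
              margUX q z.1 z.2 * Real.log (margUX q z.1 z.2 * margS p s (s z.2)
                / (margUS q s z.1 (s z.2) * margX p z.2)) else 0) ∧
      -- (v) I_{q'}(U; Y) = I_q(U; Y)
      mutInfo (fun z : 𝒰 × 𝒴 => margUY q' z.1 z.2)
        = mutInfo (fun z : 𝒰 × 𝒴 => margUY q z.1 z.2) := by
  have hUY := margUY_routeThroughS hX hs hUXY
  refine ⟨routeThroughS p s q, isPMF_routeThroughS hp hX hq.1 hmarg,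
    sum_routeThroughS_fst hX hmarg, routeThroughS_markov hX, margUS_routeThroughS hX, hUY,
    ?_, ?_⟩
  · rw [mutInfo_margUX_routeThroughS hp.1 hX hq.1 hmarg,
      mutInfo_margUX_sub_condMutInfo hX hq.1 hmarg]
  · simp only [hUY]

/-- Construction of the auxiliary variable `U'` for the information
bottleneck (Lemma 8 of the paper). -/
theorem ib_construction
    [Fintype 𝒳] [Nonempty 𝒳] [Fintype 𝒴] [Nonempty 𝒴]
    [Fintype 𝒮] [Nonempty 𝒮]
    (p : 𝒳 × 𝒴 → ℝ) (hp : IsPMF p)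
    (hX : ∀ x, 0 < margX p x) (hY : ∀ y, 0 < margY p y)
    (s : 𝒳 → 𝒮) (hs : SuffS p s)
    [Fintype 𝒰] [Nonempty 𝒰]
    (q : 𝒰 × 𝒳 × 𝒴 → ℝ) (hq : IsPMF q)
    (hmarg : ∀ x y, ∑ u, q (u, x, y) = p (x, y))
    (hUXY : ∀ u x y, q (u, x, y) * margX p x = margUX q u x * p (x, y)) :
    ∃ q' : 𝒰 × 𝒳 × 𝒴 → ℝ,
      IsPMF q' ∧
      (∀ x y, ∑ u, q' (u, x, y) = p (x, y)) ∧
      -- (i) Markov chain U' - S - X - Y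
      (∀ u x y, q' (u, x, y) * margS p s (s x) = margUS q' s u (s x) * p (x, y)) ∧
      -- (ii) (U', S) ~ (U, S)
      (∀ u s0, margUS q' s u s0 = margUS q s u s0) ∧
      -- (iii) (U', Y) ~ (U, Y)
      (∀ u y, margUY q' u y = margUY q u y) ∧
      -- (iv) I_{q'}(U; X) = I_q(U; X) - I_q(U; X | S)
      mutInfo (fun z : 𝒰 × 𝒳 => margUX q' z.1 z.2)
        = mutInfo (fun z : 𝒰 × 𝒳 => margUX q z.1 z.2)
          - ∑ z : 𝒰 × 𝒳, (if 0 < margUX q z.1 z.2 then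
              margUX q z.1 z.2 * Real.log (margUX q z.1 z.2 * margS p s (s z.2)
                / (margUS q s z.1 (s z.2) * margX p z.2)) else 0) ∧
      -- (v) I_{q'}(U; Y) = I_q(U; Y)
      mutInfo (fun z : 𝒰 × 𝒴 => margUY q' z.1 z.2)
        = mutInfo (fun z : 𝒰 × 𝒴 => margUY q z.1 z.2) :=
  ib_construction_general p hp hX s hs q hq hmarg hUXY

end IBConstruction

end
end

section
/- Suppose s : 𝒳 → 𝒮 and t : 𝒴 → 𝒯 are both sufficient. Let 𝒰 be a nonempty finite type and q a joint pmf on 𝒰 × 𝒳 × 𝒴 whose (𝒳,𝒴)-marginal is p and which satisfies the chain U−S−X−Y: q(u,x,y)·pS(s(x)) = qUS(u,s(x))·p(x,y) for all u,x,y, where qUS(u,s0) = ∑_{x : s(x)=s0} ∑_y q(u,x,y). Then I_q(U;Y) = I_q(U;T), where I_q(U;Y) is the mutual information of the (u,y)-marginal of q and I_q(U;T) is the mutual information of the joint distribution of (u, t(y)) under q. -/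
/-!
The chain `U - S - X` factors `q (u, x, y)` as `k (u, x) * p (x, y)`, so `U - X - Y`; together
with `X - T - Y` this gives `U - T - Y`, i.e. `t` is also a sufficient statistic for the
`(U, Y)`-marginal. For such a marginal the ratio `q(u, y) / (q(u) q(y))` equals
`q(u, t(y)) / (q(u) q(t(y)))`, so the two mutual-information sums agree after grouping `y` by the
fibres of `t`.
-/

open Finset

noncomputable section
open scoped Classical

variable {𝒳 𝒴 𝒮 𝒯 : Type*}

section UST

variable {𝒰 : Type*}

section MutualInformation

variable {A B C : Type*} [Fintype A] [Fintype B]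

lemma sum_mul_comp_eq_sum_fiber {R : Type*} [NonUnitalNonAssocSemiring R] [Fintype C]
    (w : B → R) (f : B → C) (φ : C → R) :
    ∑ b, w b * φ (f b) = ∑ c, (∑ b ∈ univ.filter (fun b => f b = c), w b) * φ c := by
  simp_rw [sum_mul]
  rw [← sum_fiberwise univ f]
  exact sum_congr rfl fun c _ => sum_congr rfl fun b hb => by rw [(mem_filter.1 hb).2]

lemma mutInfo_eq_sum_mul_log_s17 {r : A × B → ℝ} (hr : ∀ z, 0 ≤ r z) (g : A × B → ℝ)
    (hg : ∀ z, 0 < r z → r z / ((∑ b, r (z.1, b)) * ∑ a, r (a, z.2)) = g z) :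
    mutInfo r = ∑ z, r z * Real.log (g z) := by
  refine sum_congr rfl fun z _ => ?_
  split_ifs with h
  · rw [hg z h]
  · rw [le_antisymm (not_lt.1 h) (hr z), zero_mul]

theorem mutInfo_eq_mutInfo_map_of_suffT [Fintype C] {r : A × B → ℝ} (hr : ∀ z, 0 ≤ r z)
    {f : B → C} (hf : SuffT r f) :
    mutInfo r = mutInfo (fun z : A × C => ∑ b ∈ univ.filter (fun b => f b = z.2), r (z.1, b)) := by
  set r' : A × C → ℝ := fun z => ∑ b ∈ univ.filter (fun b => f b = z.2), r (z.1, b)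
  have hr' : ∀ z, 0 ≤ r' z := fun z => sum_nonneg fun b _ => hr (z.1, b)
  have row : ∀ a, ∑ c, r' (a, c) = ∑ b, r (a, b) := fun a =>
    sum_fiberwise univ f fun b => r (a, b)
  have col : ∀ c, ∑ a, r' (a, c) = ∑ b ∈ univ.filter (fun b => f b = c), ∑ a, r (a, b) :=
    fun c => by simp only [r']; exact sum_comm
  set g : A × C → ℝ := fun z => r' z / ((∑ c, r' (z.1, c)) * ∑ a, r' (a, z.2))
  have ratio : ∀ z : A × B, 0 < r z →
      r z / ((∑ b, r (z.1, b)) * ∑ a, r (a, z.2)) = g (z.1, f z.2) := by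
    rintro ⟨a, b⟩ hab
    have hrow : 0 < ∑ b', r (a, b') :=
      hab.trans_le (single_le_sum (fun b' _ => hr (a, b')) (mem_univ b))
    have hcol : 0 < ∑ a', r (a', b) :=
      hab.trans_le (single_le_sum (fun a' _ => hr (a', b)) (mem_univ a))
    have hcol' : 0 < ∑ b' ∈ univ.filter (fun b' => f b' = f b), ∑ a', r (a', b') :=
      hcol.trans_le (single_le_sum (fun b' _ => sum_nonneg fun a' _ => hr (a', b'))
        (mem_filter.2 ⟨mem_univ b, rfl⟩))
    have fiber : r (a, b) * ∑ b' ∈ univ.filter (fun b' => f b' = f b), ∑ a', r (a', b')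
        = r' (a, f b) * ∑ a', r (a', b) := by
      rw [mul_sum, sum_mul]
      exact sum_congr rfl fun b' hb' => hf a b b' (mem_filter.1 hb').2.symm
    simp only [g, row, col]
    rw [div_eq_div_iff (by positivity) (by positivity)]
    linear_combination (∑ b', r (a, b')) * fiber
  calc mutInfo r = ∑ z : A × B, r z * Real.log (g (z.1, f z.2)) :=
        mutInfo_eq_sum_mul_log_s17 hr _ ratio
    _ = ∑ z : A × C, r' z * Real.log (g z) := by
        simp only [Fintype.sum_prod_type]
        exact sum_congr rfl fun a _ =>
          sum_mul_comp_eq_sum_fiber (fun b => r (a, b)) f fun c => Real.log (g (a, c))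
    _ = mutInfo r' := (mutInfo_eq_sum_mul_log_s17 hr' g fun _ _ => rfl).symm

end MutualInformation

/-- The Markov chains `U - X - Y` (in factorized form) and `X - T - Y` give `U - T - Y`. -/
theorem SuffT.marginal_of_factorization {𝒰 : Type*} [Fintype 𝒰] [Fintype 𝒳] [Fintype 𝒴]
    {p : 𝒳 × 𝒴 → ℝ} {t : 𝒴 → 𝒯} (ht : SuffT p t) {q : 𝒰 × 𝒳 × 𝒴 → ℝ}
    (hmarg : ∀ x y, ∑ u, q (u, x, y) = p (x, y)) (k : 𝒰 → 𝒳 → ℝ)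
    (hk : ∀ u x y, q (u, x, y) = k u x * p (x, y)) :
    SuffT (fun z : 𝒰 × 𝒴 => ∑ x, q (z.1, x, z.2)) t := by
  have hmargY : ∀ y, margY (fun z : 𝒰 × 𝒴 => ∑ x, q (z.1, x, z.2)) y = margY p y := fun y => by
    simp only [margY]
    rw [sum_comm]
    exact sum_congr rfl fun x _ => hmarg x y
  intro u y y' hty
  dsimp only
  rw [hmargY, hmargY]
  simp only [hk, sum_mul]
  exact sum_congr rfl fun x _ => by linear_combination k u x * ht x y y' hty

theorem mutual_info_UY_eq_UT_general
    [Fintype 𝒳] [Fintype 𝒴] [Fintype 𝒯]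
    (p : 𝒳 × 𝒴 → ℝ) (hX : ∀ x, 0 < margX p x)
    (s : 𝒳 → 𝒮) (t : 𝒴 → 𝒯) (ht : SuffT p t)
    [Fintype 𝒰]
    (q : 𝒰 × 𝒳 × 𝒴 → ℝ) (hq : IsPMF q)
    (hmarg : ∀ x y, ∑ u, q (u, x, y) = p (x, y))
    (hchain : ∀ u x y, q (u, x, y) * margS p s (s x) = margUS q s u (s x) * p (x, y)) :
    mutInfo (fun z : 𝒰 × 𝒴 => ∑ x, q (z.1, x, z.2))
      = mutInfo (fun z : 𝒰 × 𝒯 =>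
          ∑ x, ∑ y ∈ Finset.univ.filter (fun y => t y = z.2), q (z.1, x, y)) := by
  have hpS : ∀ x, margS p s (s x) ≠ 0 := fun x =>
    (show 0 < margS p s (s x) from
      sum_pos (fun x' _ => hX x') ⟨x, mem_filter.2 ⟨mem_univ x, rfl⟩⟩).ne'
  have hfactor : ∀ u x y, q (u, x, y) = margUS q s u (s x) / margS p s (s x) * p (x, y) :=
    fun u x y => by rw [div_mul_eq_mul_div, eq_div_iff (hpS x)]; exact hchain u x y
  have hUTY := ht.marginal_of_factorization hmarg _ hfactor
  rw [mutInfo_eq_mutInfo_map_of_suffT (fun z => sum_nonneg fun x _ => hq.1 _) hUTY]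
  congr 1
  funext z
  exact sum_comm

/-- Under the chain `U - S - X - Y` and sufficiency of `s` and `t`,
`I(U; Y) = I(U; T)`. -/
theorem mutual_info_UY_eq_UT
    [Fintype 𝒳] [Nonempty 𝒳] [Fintype 𝒴] [Nonempty 𝒴]
    [Fintype 𝒮] [Nonempty 𝒮] [Fintype 𝒯] [Nonempty 𝒯]
    (p : 𝒳 × 𝒴 → ℝ) (hp : IsPMF p)
    (hX : ∀ x, 0 < margX p x) (hY : ∀ y, 0 < margY p y)
    (s : 𝒳 → 𝒮) (t : 𝒴 → 𝒯)
    (hs : SuffS p s) (ht : SuffT p t)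
    [Fintype 𝒰] [Nonempty 𝒰]
    (q : 𝒰 × 𝒳 × 𝒴 → ℝ) (hq : IsPMF q)
    (hmarg : ∀ x y, ∑ u, q (u, x, y) = p (x, y))
    (hchain : ∀ u x y, q (u, x, y) * margS p s (s x) = margUS q s u (s x) * p (x, y)) :
    mutInfo (fun z : 𝒰 × 𝒴 => ∑ x, q (z.1, x, z.2))
      = mutInfo (fun z : 𝒰 × 𝒯 =>
          ∑ x, ∑ y ∈ Finset.univ.filter (fun y => t y = z.2), q (z.1, x, y)) :=
  mutual_info_UY_eq_UT_general p hX s t ht q hq hmarg hchain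

end UST

end
end
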